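/- Every maximal beable subalgebra for a normal state on B(H) is weak-operator closed (a von Neumann algebra), and the weak-operator closure of any beable subalgebra for a normal state is again beable for that state. -/

import Mathlib

/-- The normal state `T ↦ Tr(KT)` associated to `K = ∑ₙ λₙ |eₙ⟩⟨eₙ|`. -/
noncomputable def trState {H : Type*} [NormedAddCommGroup H] [InnerProductSpace ℂ H]
    (e : ℕ → H) (lam : ℕ → ℝ) (T : H →L[ℂ] H) : ℂ :=
  ∑' n, (lam n : ℂ) * (inner ℂ (e n) (T (e n)) : ℂ)

/-- A set of operators is beable for the normal state determined by (e, lam) if the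
state vanishes on [A,B]*[A,B] for all A, B in the set. -/
noncomputable def IsBeable {H : Type*} [NormedAddCommGroup H] [InnerProductSpace ℂ H]
    [CompleteSpace H] (e : ℕ → H) (lam : ℕ → ℝ) (S : Set (H →L[ℂ] H)) : Prop :=
  ∀ a ∈ S, ∀ b ∈ S, trState e lam (star (a * b - b * a) * (a * b - b * a)) = 0

/-- The weak-operator-topology closure of a set of bounded operators. -/
noncomputable def wotClosure {H : Type*} [NormedAddCommGroup H] [InnerProductSpace ℂ H]
    [CompleteSpace H] (S : Set (H →L[ℂ] H)) : Set (H →L[ℂ] H) :=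
  {a | (ContinuousLinearMapWOT.ofCLM a : H →WOT[ℂ] H) ∈
    closure ((ContinuousLinearMapWOT.ofCLM : (H →L[ℂ] H) → (H →WOT[ℂ] H)) '' S)}

/-!
For the density `∑ λₙ |eₙ⟩⟨eₙ|` one has `ρ(C⋆C) = ∑ λₙ ‖C eₙ‖²`, so a set of operators is beable
exactly when every commutator `[A, B]` of its elements kills each `eₙ` with `λₙ ≠ 0`. For a fixed
vector `v` the set `{T | T v = 0}` is weak-operator closed and multiplication is separately
WOT-continuous, so this condition passes to WOT closures, one variable at a time. Hence the WOT
closure of a beable set is beable; since the WOT closure of a star subalgebra is again a star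
subalgebra containing it, a maximal beable one must coincide with its closure.
-/

theorem forall_mem_closure_of_isClosed_setOf {X Y : Type*} [TopologicalSpace X]
    [TopologicalSpace Y] {p : X → Y → Prop} (hX : ∀ y, IsClosed {x | p x y})
    (hY : ∀ x, IsClosed {y | p x y}) {s : Set X} {t : Set Y} (h : ∀ x ∈ s, ∀ y ∈ t, p x y) :
    ∀ x ∈ closure s, ∀ y ∈ closure t, p x y := by
  have h' : ∀ y ∈ t, ∀ x ∈ closure s, p x y := fun y hy =>
    closure_minimal (fun x hx => h x hx y hy) (hX y)
  exact fun x hx => closure_minimal (fun y hy => h' y hy x hx) (hY x)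

theorem IsClosed.commutator_mem_of_mem_closure {R : Type*} [Ring R] [TopologicalSpace R]
    [IsSemitopologicalRing R] {Z : Set R} (hZ : IsClosed Z) {S : Set R}
    (hS : ∀ a ∈ S, ∀ b ∈ S, a * b - b * a ∈ Z) :
    ∀ a ∈ closure S, ∀ b ∈ closure S, a * b - b * a ∈ Z :=
  forall_mem_closure_of_isClosed_setOf
    (fun b => hZ.preimage ((continuous_mul_const b).sub (continuous_const_mul b)))
    (fun a => hZ.preimage ((continuous_const_mul a).sub (continuous_mul_const a))) hS

theorem ContinuousLinearMapWOT.isClosed_setOf_apply_eq_zero {𝕜 E F : Type*}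
    [NontriviallyNormedField 𝕜] [NormedAddCommGroup E] [NormedSpace 𝕜 E] [NormedAddCommGroup F]
    [NormedSpace 𝕜 F] [SeparatingDual 𝕜 F] (x : E) :
    IsClosed {A : E →WOT[𝕜] F | A x = 0} := by
  simp only [SeparatingDual.eq_zero_iff_forall_dual_eq_zero (R := 𝕜), Set.ofPred_forall]
  exact isClosed_iInter fun y => isClosed_eq (continuous_dual_apply x y) continuous_const

section WOTClosure

variable {𝕜 E : Type*} [RCLike 𝕜] [NormedAddCommGroup E] [InnerProductSpace 𝕜 E] [CompleteSpace E]

variable (𝕜 E) in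
noncomputable def ContinuousLinearMap.toWOTStarAlgHom : (E →L[𝕜] E) →⋆ₐ[𝕜] (E →WOT[𝕜] E) :=
  { (ContinuousLinearMapWOT.algEquiv 𝕜).symm.toAlgHom with map_star' := fun _ => rfl }

noncomputable def StarSubalgebra.wotTopologicalClosure (s : StarSubalgebra 𝕜 (E →L[𝕜] E)) :
    StarSubalgebra 𝕜 (E →L[𝕜] E) :=
  (s.map (ContinuousLinearMap.toWOTStarAlgHom 𝕜 E)).topologicalClosure.comap
    (ContinuousLinearMap.toWOTStarAlgHom 𝕜 E)

theorem StarSubalgebra.le_wotTopologicalClosure (s : StarSubalgebra 𝕜 (E →L[𝕜] E)) :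
    s ≤ s.wotTopologicalClosure := fun _ ha =>
  subset_closure (Set.mem_image_of_mem _ ha)

end WOTClosure

section Beable

variable {H : Type*} [NormedAddCommGroup H] [InnerProductSpace ℂ H] [CompleteSpace H]

theorem ContinuousLinearMap.inner_star_mul_self_apply (C : H →L[ℂ] H) (x : H) :
    inner ℂ x ((star C * C) x) = (‖C x‖ : ℂ) ^ 2 := by
  rw [mul_apply_eq_comp, ContinuousLinearMap.star_eq_adjoint,
    ContinuousLinearMap.adjoint_inner_right]
  exact inner_self_eq_norm_sq_to_K _

theorem trState_star_mul_self (e : ℕ → H) (lam : ℕ → ℝ) (C : H →L[ℂ] H) :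
    trState e lam (star C * C) = ((∑' n, lam n * ‖C (e n)‖ ^ 2 : ℝ) : ℂ) := by
  simp only [trState, ContinuousLinearMap.inner_star_mul_self_apply, Complex.ofReal_tsum]
  push_cast
  rfl

theorem trState_star_mul_self_eq_zero_iff {e : ℕ → H} (he : Orthonormal ℂ e) {lam : ℕ → ℝ}
    (hlam : ∀ n, 0 ≤ lam n) (hsum : Summable lam) (C : H →L[ℂ] H) :
    trState e lam (star C * C) = 0 ↔ ∀ n, lam n ≠ 0 → C (e n) = 0 := by
  have hnonneg : ∀ n, 0 ≤ lam n * ‖C (e n)‖ ^ 2 := fun n => mul_nonneg (hlam n) (sq_nonneg _)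
  have hsummable : Summable fun n => lam n * ‖C (e n)‖ ^ 2 := by
    refine .of_nonneg_of_le hnonneg (fun n => ?_) (hsum.mul_right (‖C‖ ^ 2))
    have : ‖C (e n)‖ ≤ ‖C‖ := by simpa [he.1 n] using C.le_opNorm (e n)
    gcongr
    exact hlam n
  rw [trState_star_mul_self, Complex.ofReal_eq_zero, ← hsummable.hasSum_iff,
    hasSum_zero_iff_of_nonneg hnonneg]
  simp [funext_iff, or_iff_not_imp_left]

theorem isBeable_iff_commutator_apply_eq_zero {e : ℕ → H} (he : Orthonormal ℂ e) {lam : ℕ → ℝ}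
    (hlam : ∀ n, 0 ≤ lam n) (hsum : Summable lam) (S : Set (H →L[ℂ] H)) :
    IsBeable e lam S ↔ ∀ n, lam n ≠ 0 → ∀ a ∈ S, ∀ b ∈ S, (a * b - b * a) (e n) = 0 := by
  simp only [IsBeable, trState_star_mul_self_eq_zero_iff he hlam hsum]
  grind

theorem IsBeable.wotClosure {e : ℕ → H} (he : Orthonormal ℂ e) {lam : ℕ → ℝ}
    (hlam : ∀ n, 0 ≤ lam n) (hsum : Summable lam) {S : Set (H →L[ℂ] H)}
    (hS : IsBeable e lam S) : IsBeable e lam (wotClosure S) := by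
  rw [isBeable_iff_commutator_apply_eq_zero he hlam hsum] at hS ⊢
  intro n hn a ha b hb
  refine (ContinuousLinearMapWOT.isClosed_setOf_apply_eq_zero (e n)).commutator_mem_of_mem_closure
    ?_ _ ha _ hb
  rintro _ ⟨a, ha, rfl⟩ _ ⟨b, hb, rfl⟩
  exact hS n hn a ha b hb

theorem StarSubalgebra.coe_wotTopologicalClosure (s : StarSubalgebra ℂ (H →L[ℂ] H)) :
    (s.wotTopologicalClosure : Set (H →L[ℂ] H)) = wotClosure (s : Set (H →L[ℂ] H)) :=
  rfl

end Beable

/-- For a normal state ρ on B(H) (given by a positive trace-one operator via (e, lam)):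
(i) every maximal beable unital C*-subalgebra is weak-operator closed, and
(ii) the weak-operator closure of any beable subalgebra is again beable for ρ. -/
theorem stmt_12 {H : Type*} [NormedAddCommGroup H] [InnerProductSpace ℂ H] [CompleteSpace H]
    (e : ℕ → H) (he : Orthonormal ℂ e)
    (lam : ℕ → ℝ) (hlam : ∀ n, 0 ≤ lam n) (hsum : ∑' n, lam n = 1) :
    (∀ 𝔅 : StarSubalgebra ℂ (H →L[ℂ] H),
      IsBeable e lam (𝔅 : Set (H →L[ℂ] H)) →
      (∀ C : StarSubalgebra ℂ (H →L[ℂ] H),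
        IsBeable e lam (C : Set (H →L[ℂ] H)) → 𝔅 ≤ C → C = 𝔅) →
      wotClosure (𝔅 : Set (H →L[ℂ] H)) = (𝔅 : Set (H →L[ℂ] H))) ∧
    (∀ 𝔅 : StarSubalgebra ℂ (H →L[ℂ] H),
      IsBeable e lam (𝔅 : Set (H →L[ℂ] H)) →
      IsBeable e lam (wotClosure (𝔅 : Set (H →L[ℂ] H)))) := by
  have hlam_summable : Summable lam := by
    by_contra h
    simp [tsum_eq_zero_of_not_summable h] at hsum
  refine ⟨fun 𝔅 h𝔅 hmax => ?_, fun 𝔅 h𝔅 => h𝔅.wotClosure he hlam hlam_summable⟩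
  have hclosure : IsBeable e lam (𝔅.wotTopologicalClosure : Set (H →L[ℂ] H)) :=
    h𝔅.wotClosure he hlam hlam_summable
  rw [← StarSubalgebra.coe_wotTopologicalClosure,
    hmax _ hclosure (StarSubalgebra.le_wotTopologicalClosure 𝔅)]
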